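/- Let G be the edge-switched hypergraph G⟨U_1 ⇌ V_1⟩ = G' as in the edge-switching lemma, with G' connected, and let X be the positive unit principal eigenvector of G. If x_{U_1} ≥ x_{V_1}, x_{U_2} ≤ x_{V_2}, and ρ(G) = ρ(G'), then X is also a principal eigenvector of G', i.e. A_{G'} X = ρ(G') X. -/

import Mathlib

open Matrix BigOperators

/-- A hypergraph on vertex set `Fin n`: a set of edges, each an at-least-2-element
vertex subset. -/
structure Hypergraph' (n : ℕ) where
  edges : Finset (Finset (Fin n))
  two_le_card : ∀ e ∈ edges, 2 ≤ e.card

namespace Hypergraph'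

variable {n : ℕ}

/-- The adjacency matrix `(A_G)_{ij} = Σ_{e ∋ i,j} 1/(|e|-1)` for `i ≠ j`, zero diagonal. -/
noncomputable def adjMat (G : Hypergraph' n) : Matrix (Fin n) (Fin n) ℝ :=
  fun i j => if i = j then 0 else
    ∑ e ∈ G.edges.filter (fun e => i ∈ e ∧ j ∈ e), (1 : ℝ) / ((e.card : ℝ) - 1)

/-- `G` is `k`-uniform if every edge has exactly `k` vertices. -/
def IsUniform (G : Hypergraph' n) (k : ℕ) : Prop := ∀ e ∈ G.edges, e.card = k

/-- Degree of a vertex: the number of edges containing it. -/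
def degree (G : Hypergraph' n) (v : Fin n) : ℕ := (G.edges.filter (fun e => v ∈ e)).card

/-- Connectivity: any two vertices are linked by a walk of overlapping edges. -/
def Connected (G : Hypergraph' n) : Prop :=
  ∀ i j : Fin n, Relation.ReflTransGen (fun a b => ∃ e ∈ G.edges, a ∈ e ∧ b ∈ e) i j

/-- Every vertex lies in some edge (no isolated vertices, so the order is `n`). -/
def Covers (G : Hypergraph' n) : Prop := ∀ v : Fin n, ∃ e ∈ G.edges, v ∈ e

/-- A pendant edge attached at `v`: all its vertices other than `v` have degree 1. -/
def IsPendantAt (G : Hypergraph' n) (e : Finset (Fin n)) (v : Fin n) : Prop :=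
  e ∈ G.edges ∧ v ∈ e ∧ ∀ u ∈ e, u ≠ v → G.degree u = 1

/-- `v, e` (indices modulo `q`) form a hypercycle of length `q ≥ 2` in `G`:
distinct vertices, distinct edges, `v i, v (i+1) ∈ e i`, consecutive edges meet
exactly in the shared vertex (when `q ≥ 3`), non-consecutive edges are disjoint. -/
def IsCycle (G : Hypergraph' n) (q : ℕ) (v : ℕ → Fin n) (e : ℕ → Finset (Fin n)) : Prop :=
  2 ≤ q ∧
  (∀ i < q, ∀ j < q, v i = v j → i = j) ∧
  (∀ i < q, ∀ j < q, e i = e j → i = j) ∧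
  (∀ i < q, e i ∈ G.edges) ∧
  (∀ i < q, v i ∈ e i ∧ v ((i + 1) % q) ∈ e i) ∧
  (3 ≤ q → ∀ i < q, e i ∩ e ((i + 1) % q) = {v ((i + 1) % q)}) ∧
  (∀ i < q, ∀ j < q, i ≠ j → (i + 1) % q ≠ j → (j + 1) % q ≠ i → e i ∩ e j = ∅)

/-- `G` contains a hypercycle. -/
def HasCycle (G : Hypergraph' n) : Prop :=
  ∃ (q : ℕ) (v : ℕ → Fin n) (e : ℕ → Finset (Fin n)), IsCycle G q v e

end Hypergraph'

open Hypergraph'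

/-- `G` is a `k`-uniform unicyclic hypergraph of order `n`: connected with
`n - 1 = (k-1)m - 1`. -/
def IsUnicyclic (k : ℕ) {n : ℕ} (G : Hypergraph' n) : Prop :=
  G.IsUniform k ∧ G.Connected ∧
    (n : ℤ) - 1 = ((k : ℤ) - 1) * (G.edges.card : ℤ) - 1

/-- Isomorphism of two hypergraphs on the same vertex set. -/
def Isomorphic {n : ℕ} (G H : Hypergraph' n) : Prop :=
  ∃ σ : Equiv.Perm (Fin n), ∀ e : Finset (Fin n), e ∈ G.edges ↔ e.image σ ∈ H.edges

/-- The permutation matrix of `σ`, so that `(P_σ X) i = X (σ⁻¹ i)`. -/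
def permMat {n : ℕ} (σ : Equiv.Perm (Fin n)) : Matrix (Fin n) (Fin n) ℝ :=
  fun i j => if σ j = i then 1 else 0

/-- `σ` is an automorphism of `G`. -/
def IsAuto {n : ℕ} (G : Hypergraph' n) (σ : Equiv.Perm (Fin n)) : Prop :=
  ∀ e : Finset (Fin n), e ∈ G.edges ↔ e.image σ ∈ G.edges

/-- The spectral radius of a real matrix: the largest modulus of a (real) eigenvalue. -/
noncomputable def specRad {n : ℕ} (A : Matrix (Fin n) (Fin n) ℝ) : ℝ :=
  ⨆ μ : spectrum ℝ A, |(μ : ℝ)|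

/-- The hypergraph `U*`: a 2-hypercycle on `v₁, v₂` (two edges meeting exactly in
`{v₁, v₂}`) with all remaining edges pendant edges attached at `v₁`. -/
def IsUstar (k : ℕ) {n : ℕ} (G : Hypergraph' n) : Prop :=
  G.IsUniform k ∧ G.Covers ∧
  ∃ v1 v2 : Fin n, v1 ≠ v2 ∧ ∃ e1 ∈ G.edges, ∃ e2 ∈ G.edges, e1 ≠ e2 ∧
    e1 ∩ e2 = {v1, v2} ∧
    ∀ e ∈ G.edges, e ≠ e1 → e ≠ e2 → G.IsPendantAt e v1

/-- The hypergraph `F`: a 2-hypercycle on `v₁, v₂`, one pendant edge at `v₂`,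
all remaining edges pendant at `v₁`. -/
def IsF (k : ℕ) {n : ℕ} (G : Hypergraph' n) : Prop :=
  G.IsUniform k ∧ G.Covers ∧
  ∃ v1 v2 : Fin n, v1 ≠ v2 ∧ ∃ e1 ∈ G.edges, ∃ e2 ∈ G.edges, e1 ≠ e2 ∧
    e1 ∩ e2 = {v1, v2} ∧
    ∃ f ∈ G.edges, f ≠ e1 ∧ f ≠ e2 ∧ G.IsPendantAt f v2 ∧
      ∀ e ∈ G.edges, e ≠ e1 → e ≠ e2 → e ≠ f → G.IsPendantAt e v1

/-- The hypergraph `F₁`: a 2-hypercycle on `v₁, v₂`, all remaining edges pendant at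
a vertex `η ∈ e₂ \ {v₁, v₂}`. -/
def IsF1 (k : ℕ) {n : ℕ} (G : Hypergraph' n) : Prop :=
  G.IsUniform k ∧ G.Covers ∧
  ∃ v1 v2 η : Fin n, v1 ≠ v2 ∧ ∃ e1 ∈ G.edges, ∃ e2 ∈ G.edges, e1 ≠ e2 ∧
    e1 ∩ e2 = {v1, v2} ∧ η ∈ e2 ∧ η ≠ v1 ∧ η ≠ v2 ∧
    ∀ e ∈ G.edges, e ≠ e1 → e ≠ e2 → G.IsPendantAt e η

/-- The hypergraph `F₂`: a 2-hypercycle on `v₁, v₂`, one pendant edge at `v₁`, all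
remaining edges pendant at a vertex `η ∈ e₂ \ {v₁, v₂}`. -/
def IsF2 (k : ℕ) {n : ℕ} (G : Hypergraph' n) : Prop :=
  G.IsUniform k ∧ G.Covers ∧
  ∃ v1 v2 η : Fin n, v1 ≠ v2 ∧ ∃ e1 ∈ G.edges, ∃ e2 ∈ G.edges, e1 ≠ e2 ∧
    e1 ∩ e2 = {v1, v2} ∧ η ∈ e2 ∧ η ≠ v1 ∧ η ≠ v2 ∧
    ∃ f ∈ G.edges, f ≠ e1 ∧ f ≠ e2 ∧ G.IsPendantAt f v1 ∧
      ∀ e ∈ G.edges, e ≠ e1 → e ≠ e2 → e ≠ f → G.IsPendantAt e η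

/-- The hypergraph `F₃`: a 2-hypercycle on `v₁, v₂`, one pendant edge at a vertex
`η ∈ e₂ \ {v₁, v₂}`, all remaining edges pendant at `v₁`. -/
def IsF3 (k : ℕ) {n : ℕ} (G : Hypergraph' n) : Prop :=
  G.IsUniform k ∧ G.Covers ∧
  ∃ v1 v2 η : Fin n, v1 ≠ v2 ∧ ∃ e1 ∈ G.edges, ∃ e2 ∈ G.edges, e1 ≠ e2 ∧
    e1 ∩ e2 = {v1, v2} ∧ η ∈ e2 ∧ η ≠ v1 ∧ η ≠ v2 ∧
    ∃ f ∈ G.edges, f ≠ e1 ∧ f ≠ e2 ∧ G.IsPendantAt f η ∧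
      ∀ e ∈ G.edges, e ≠ e1 → e ≠ e2 → e ≠ f → G.IsPendantAt e v1

/-- The hypergraph `F_(R;S;T)`: a 2-hypercycle on `v₁, v₂` with every remaining edge
a pendant edge attached at some vertex of `e₁ ∪ e₂`. -/
def IsFRST (k : ℕ) {n : ℕ} (G : Hypergraph' n) : Prop :=
  G.IsUniform k ∧ G.Covers ∧
  ∃ v1 v2 : Fin n, v1 ≠ v2 ∧ ∃ e1 ∈ G.edges, ∃ e2 ∈ G.edges, e1 ≠ e2 ∧
    e1 ∩ e2 = {v1, v2} ∧
    ∀ e ∈ G.edges, e ≠ e1 → e ≠ e2 → ∃ w ∈ e1 ∪ e2, G.IsPendantAt e w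


section AuxStmt8

lemma adjMat_isHermitian' {n : ℕ} (G : Hypergraph' n) : G.adjMat.IsHermitian := by
  ext i j
  simp only [Matrix.conjTranspose_apply, star_trivial, Hypergraph'.adjMat]
  by_cases h : i = j
  · simp [h]
  · rw [if_neg (Ne.symm h), if_neg h]
    congr 1
    ext s
    simp [and_comm]

lemma quadForm_eq' {n : ℕ} (G : Hypergraph' n) (X : Fin n → ℝ) :
    X ⬝ᵥ (G.adjMat *ᵥ X) =
      ∑ s ∈ G.edges, ((∑ v ∈ s, X v) ^ 2 - ∑ v ∈ s, (X v) ^ 2) / ((s.card : ℝ) - 1) := by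
  classical
  have key : ∀ i j : Fin n, X i * (G.adjMat i j * X j)
      = ∑ s ∈ G.edges, if i ∈ s ∧ j ∈ s ∧ i ≠ j then X i * X j / ((s.card : ℝ) - 1) else 0 := by
    intro i j
    by_cases h : i = j
    · simp [Hypergraph'.adjMat, h]
    · simp only [Hypergraph'.adjMat, if_neg h, Finset.sum_filter, Finset.mul_sum,
        Finset.sum_mul, mul_ite, mul_zero, zero_mul, ite_mul]
      refine Finset.sum_congr rfl fun s _ => ?_
      by_cases hm : i ∈ s ∧ j ∈ s
      · rw [if_pos hm, if_pos ⟨hm.1, hm.2, h⟩]; ring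
      · rw [if_neg hm, if_neg (by tauto)]
  have lhs : X ⬝ᵥ (G.adjMat *ᵥ X)
      = ∑ s ∈ G.edges, ∑ i, ∑ j, if i ∈ s ∧ j ∈ s ∧ i ≠ j then X i * X j / ((s.card : ℝ) - 1) else 0 := by
    simp only [dotProduct, Matrix.mulVec, Finset.mul_sum]
    simp only [key]
    rw [show (∑ i, ∑ j, ∑ s ∈ G.edges,
        if i ∈ s ∧ j ∈ s ∧ i ≠ j then X i * X j / ((s.card : ℝ) - 1) else 0)
      = ∑ i, ∑ s ∈ G.edges, ∑ j,
        if i ∈ s ∧ j ∈ s ∧ i ≠ j then X i * X j / ((s.card : ℝ) - 1) else 0 from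
      Finset.sum_congr rfl fun i _ => Finset.sum_comm]
    exact Finset.sum_comm
  rw [lhs]
  refine Finset.sum_congr rfl fun s _ => ?_
  have step1 : (∑ i, ∑ j, if i ∈ s ∧ j ∈ s ∧ i ≠ j then X i * X j / ((s.card : ℝ) - 1) else 0)
      = ∑ i ∈ s, ∑ j ∈ s, if i = j then 0 else X i * X j / ((s.card : ℝ) - 1) := by
    have expand : ∀ i j : Fin n,
        (if i ∈ s ∧ j ∈ s ∧ i ≠ j then X i * X j / ((s.card : ℝ) - 1) else 0)
        = (if i ∈ s then (if j ∈ s then (if i = j then 0 else X i * X j / ((s.card : ℝ) - 1)) else 0) else 0) := by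
      intro i j
      split_ifs <;> first | rfl | (exfalso; tauto)
    simp only [expand]
    rw [← Finset.sum_subset (Finset.subset_univ s)
      (fun x _ hx => Finset.sum_eq_zero fun _ _ => if_neg hx)]
    refine Finset.sum_congr rfl fun i hi => ?_
    simp only [if_pos hi]
    rw [← Finset.sum_subset (Finset.subset_univ s) (fun x _ hx => by rw [if_neg hx])]
    exact Finset.sum_congr rfl fun j hj => if_pos hj
  rw [step1]
  have step2 : (∑ i ∈ s, ∑ j ∈ s, if i = j then 0 else X i * X j / ((s.card : ℝ) - 1))
      = ∑ i ∈ s, ((∑ j ∈ s, X i * X j / ((s.card : ℝ) - 1)) - X i * X i / ((s.card : ℝ) - 1)) := by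
    refine Finset.sum_congr rfl fun i hi => ?_
    have : ∀ j : Fin n, (if i = j then 0 else X i * X j / ((s.card : ℝ) - 1))
        = X i * X j / ((s.card : ℝ) - 1) - (if i = j then X i * X j / ((s.card : ℝ) - 1) else 0) := by
      intro j; split_ifs <;> ring
    simp only [this, Finset.sum_sub_distrib, Finset.sum_ite_eq, hi, if_pos]
  rw [step2, Finset.sum_sub_distrib, sub_div]
  congr 1
  · rw [sq, Finset.sum_mul_sum, Finset.sum_div]
    exact Finset.sum_congr rfl fun i _ => by rw [Finset.sum_div]
  · rw [Finset.sum_div]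
    exact Finset.sum_congr rfl fun i _ => by rw [sq]

lemma eigenvalue_le_specRad' {n : ℕ} {A : Matrix (Fin n) (Fin n) ℝ} (hA : A.IsHermitian)
    (i : Fin n) : hA.eigenvalues i ≤ specRad A := by
  have hmem : hA.eigenvalues i ∈ spectrum ℝ A := hA.eigenvalues_mem_spectrum_real i
  have hbdd : BddAbove (Set.range fun μ : spectrum ℝ A => |(μ : ℝ)|) :=
    (Set.finite_range _).bddAbove
  calc hA.eigenvalues i ≤ |hA.eigenvalues i| := le_abs_self _
    _ ≤ specRad A := le_ciSup hbdd (⟨_, hmem⟩ : spectrum ℝ A)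

lemma rayleigh' {n : ℕ} {A : Matrix (Fin n) (Fin n) ℝ} (hA : A.IsHermitian)
    (X : Fin n → ℝ) (hunit : ∑ i, X i ^ 2 = 1) :
    X ⬝ᵥ (A *ᵥ X) ≤ specRad A ∧
      (X ⬝ᵥ (A *ᵥ X) = specRad A → A *ᵥ X = specRad A • X) := by
  classical
  set U : Matrix (Fin n) (Fin n) ℝ := (hA.eigenvectorUnitary : Matrix (Fin n) (Fin n) ℝ) with hU
  have hUmem := (hA.eigenvectorUnitary).2
  have hUU : U * star U = 1 := (Matrix.mem_unitaryGroup_iff).mp hUmem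
  have hUUt : U * Uᵀ = 1 := by
    rw [← Matrix.conjTranspose_eq_transpose_of_trivial, ← Matrix.star_eq_conjTranspose]
    exact hUU
  set μ : Fin n → ℝ := hA.eigenvalues with hμ
  have hspec : A = U * Matrix.diagonal μ * star U := by
    have := hA.spectral_theorem
    simpa [hU, hμ] using this
  set Y : Fin n → ℝ := star U *ᵥ X with hY
  have hXY : U *ᵥ Y = X := by
    rw [hY, Matrix.mulVec_mulVec, hUU, Matrix.one_mulVec]
  have hYvm : X ᵥ* U = Y := by
    rw [hY, Matrix.star_eq_conjTranspose, Matrix.conjTranspose_eq_transpose_of_trivial,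
      Matrix.mulVec_transpose]
  have hYnorm : ∑ i, Y i ^ 2 = 1 := by
    have h1 : Y ⬝ᵥ Y = X ⬝ᵥ X := by
      rw [← hYvm, ← Matrix.dotProduct_mulVec, Matrix.mulVec_vecMul, hUUt, Matrix.one_mulVec]
    have h2 : Y ⬝ᵥ Y = ∑ i, Y i ^ 2 := by simp [dotProduct, sq]
    have h3 : X ⬝ᵥ X = ∑ i, X i ^ 2 := by simp [dotProduct, sq]
    rw [← h2, h1, h3, hunit]
  have hquad : X ⬝ᵥ (A *ᵥ X) = ∑ i, μ i * Y i ^ 2 := by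
    conv_lhs => rw [hspec, ← Matrix.mulVec_mulVec, ← hY, ← Matrix.mulVec_mulVec,
      Matrix.dotProduct_mulVec, hYvm]
    simp only [dotProduct, Matrix.mulVec_diagonal]
    exact Finset.sum_congr rfl fun i _ => by ring
  set ρ := specRad A with hρ
  have hsum_le : X ⬝ᵥ (A *ᵥ X) ≤ ρ := by
    rw [hquad]
    calc ∑ i, μ i * Y i ^ 2 ≤ ∑ i, ρ * Y i ^ 2 :=
          Finset.sum_le_sum fun i _ =>
            mul_le_mul_of_nonneg_right (eigenvalue_le_specRad' hA i) (sq_nonneg _)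
      _ = ρ := by rw [← Finset.mul_sum, hYnorm, mul_one]
  refine ⟨hsum_le, fun heq => ?_⟩
  have hsum0 : ∑ i, (ρ - μ i) * Y i ^ 2 = 0 := by
    have : ∑ i, (ρ - μ i) * Y i ^ 2 = ρ - X ⬝ᵥ (A *ᵥ X) := by
      rw [hquad]
      simp only [sub_mul, Finset.sum_sub_distrib, ← Finset.mul_sum, hYnorm, mul_one]
    rw [this, heq, sub_self]
  have hzero : ∀ i, (ρ - μ i) * Y i ^ 2 = 0 := fun i =>
    (Finset.sum_eq_zero_iff_of_nonneg fun j _ =>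
      mul_nonneg (sub_nonneg.mpr (eigenvalue_le_specRad' hA j)) (sq_nonneg _)).mp
      hsum0 i (Finset.mem_univ i)
  have hDY : Matrix.diagonal μ *ᵥ Y = ρ • Y := by
    funext i
    rw [Matrix.mulVec_diagonal, Pi.smul_apply, smul_eq_mul]
    rcases mul_eq_zero.mp (hzero i) with h | h
    · rw [sub_eq_zero.mp h]
    · rw [pow_eq_zero_iff (by norm_num)] at h
      rw [h, mul_zero, mul_zero]
  calc A *ᵥ X = U *ᵥ (Matrix.diagonal μ *ᵥ Y) := by
        rw [hspec, ← Matrix.mulVec_mulVec, ← hY, ← Matrix.mulVec_mulVec]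
    _ = U *ᵥ (ρ • Y) := by rw [hDY]
    _ = ρ • (U *ᵥ Y) := Matrix.mulVec_smul _ _ _
    _ = ρ • X := by rw [hXY]

end AuxStmt8

/-- edge-switching with `x_{U₁} ≥ x_{V₁}`, `x_{U₂} ≤ x_{V₂}` and
`ρ(G) = ρ(G')` forces the Perron vector of `G` to be a principal eigenvector of
`G'` as well. -/
theorem stmt8 {n k r : ℕ} (hk : 2 ≤ k) (hr1 : 1 ≤ r) (hrk : r ≤ k - 1)
    (G G' : Hypergraph' n) (huni : G.IsUniform k) (huni' : G'.IsUniform k)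
    (hconn : G.Connected) (hconn' : G'.Connected)
    (e f : Finset (Fin n)) (he : e ∈ G.edges) (hf : f ∈ G.edges) (hef : e ≠ f)
    (U1 V1 : Finset (Fin n)) (hU1 : U1 ⊆ e) (hV1 : V1 ⊆ f)
    (hU1card : U1.card = r) (hV1card : V1.card = r)
    (henew : (e \ U1) ∪ V1 ∉ G.edges) (hfnew : (f \ V1) ∪ U1 ∉ G.edges)
    (hnewne : (e \ U1) ∪ V1 ≠ (f \ V1) ∪ U1)
    (hG' : G'.edges = (G.edges \ {e, f}) ∪ {(e \ U1) ∪ V1, (f \ V1) ∪ U1})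
    (X : Fin n → ℝ) (hpos : ∀ i, 0 < X i) (hunit : ∑ i, X i ^ 2 = 1)
    (hX : G.adjMat *ᵥ X = specRad G.adjMat • X)
    (hU1ge : (∑ v ∈ V1, X v) ≤ (∑ v ∈ U1, X v))
    (hU2le : (∑ v ∈ e \ U1, X v) ≤ (∑ v ∈ f \ V1, X v))
    (hrho : specRad G.adjMat = specRad G'.adjMat) :
    G'.adjMat *ᵥ X = specRad G'.adjMat • X := by
  classical
  set A := G'.adjMat with hAdef
  have hA : A.IsHermitian := adjMat_isHermitian' G'
  set e' := (e \ U1) ∪ V1 with he'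
  set f' := (f \ V1) ∪ U1 with hf'
  have he'mem : e' ∈ G'.edges := by
    rw [hG']; exact Finset.mem_union_right _ (by simp)
  have hf'mem : f' ∈ G'.edges := by
    rw [hG']; exact Finset.mem_union_right _ (by simp)
  have hcard_e : e.card = k := huni e he
  have hcard_f : f.card = k := huni f hf
  have hcard_e' : e'.card = k := huni' e' he'mem
  have hcard_f' : f'.card = k := huni' f' hf'mem
  have hrk' : r ≤ k := le_trans hrk (Nat.sub_le k 1)
  have hcard_eU1 : (e \ U1).card = k - r := by
    rw [Finset.card_sdiff_of_subset hU1, hcard_e, hU1card]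
  have hcard_fV1 : (f \ V1).card = k - r := by
    rw [Finset.card_sdiff_of_subset hV1, hcard_f, hV1card]
  have hdisj_e' : Disjoint (e \ U1) V1 := by
    refine Finset.card_union_eq_card_add_card.mp ?_
    rw [← he', hcard_e', hcard_eU1, hV1card]
    omega
  have hdisj_f' : Disjoint (f \ V1) U1 := by
    refine Finset.card_union_eq_card_add_card.mp ?_
    rw [← hf', hcard_f', hcard_fV1, hU1card]
    omega
  set g : Finset (Fin n) → ℝ :=
    fun s => ((∑ v ∈ s, X v) ^ 2 - ∑ v ∈ s, (X v) ^ 2) / ((s.card : ℝ) - 1) with hg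
  have hsplit : ∑ s ∈ G'.edges, g s
      = (∑ s ∈ G.edges, g s - (g e + g f)) + (g e' + g f') := by
    rw [hG']
    have hpairsub : ({e, f} : Finset (Finset (Fin n))) ⊆ G.edges := by
      intro s hs
      rcases Finset.mem_insert.mp hs with h | h
      · rw [h]; exact he
      · rw [Finset.mem_singleton.mp h]; exact hf
    have hd : Disjoint (G.edges \ {e, f}) ({e', f'} : Finset (Finset (Fin n))) := by
      rw [Finset.disjoint_right]
      intro s hs hs'
      rcases Finset.mem_insert.mp hs with h | h
      · exact henew (h ▸ (Finset.mem_sdiff.mp hs').1)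
      · exact hfnew ((Finset.mem_singleton.mp h) ▸ (Finset.mem_sdiff.mp hs').1)
    rw [Finset.sum_union hd, Finset.sum_sdiff_eq_sub hpairsub, Finset.sum_pair hef,
      Finset.sum_pair hnewne]
  have hXX : X ⬝ᵥ X = 1 := by simpa [dotProduct, sq] using hunit
  have hQG : X ⬝ᵥ (G.adjMat *ᵥ X) = specRad G.adjMat := by
    rw [hX, dotProduct_smul, hXX, smul_eq_mul, mul_one]
  have hkey : g e + g f ≤ g e' + g f' := by
    have hK : (0 : ℝ) < (k : ℝ) - 1 := by
      have : (2 : ℝ) ≤ (k : ℝ) := by exact_mod_cast hk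
      linarith
    have hse : ∀ Z : Fin n → ℝ, (∑ v ∈ e \ U1, Z v) + ∑ v ∈ U1, Z v = ∑ v ∈ e, Z v :=
      fun Z => Finset.sum_sdiff hU1
    have hsf : ∀ Z : Fin n → ℝ, (∑ v ∈ f \ V1, Z v) + ∑ v ∈ V1, Z v = ∑ v ∈ f, Z v :=
      fun Z => Finset.sum_sdiff hV1
    have hse' : ∀ Z : Fin n → ℝ, ∑ v ∈ e', Z v = (∑ v ∈ e \ U1, Z v) + ∑ v ∈ V1, Z v :=
      fun Z => Finset.sum_union hdisj_e'
    have hsf' : ∀ Z : Fin n → ℝ, ∑ v ∈ f', Z v = (∑ v ∈ f \ V1, Z v) + ∑ v ∈ U1, Z v :=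
      fun Z => Finset.sum_union hdisj_f'
    simp only [hg, hcard_e, hcard_f, hcard_e', hcard_f',
      ← hse X, ← hsf X, ← hse (fun v => X v ^ 2), ← hsf (fun v => X v ^ 2),
      hse' X, hsf' X, hse' (fun v => X v ^ 2), hsf' (fun v => X v ^ 2)]
    rw [← add_div, ← add_div, div_le_div_iff_of_pos_right hK]
    nlinarith [mul_nonneg (sub_nonneg.mpr hU1ge) (sub_nonneg.mpr hU2le)]
  have hQle : specRad G.adjMat ≤ X ⬝ᵥ (A *ᵥ X) := by
    rw [← hQG, quadForm_eq' G X, quadForm_eq' G' X]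
    rw [show (∑ s ∈ G'.edges, ((∑ v ∈ s, X v) ^ 2 - ∑ v ∈ s, (X v) ^ 2) / ((s.card : ℝ) - 1))
        = ∑ s ∈ G'.edges, g s from rfl,
      show (∑ s ∈ G.edges, ((∑ v ∈ s, X v) ^ 2 - ∑ v ∈ s, (X v) ^ 2) / ((s.card : ℝ) - 1))
        = ∑ s ∈ G.edges, g s from rfl, hsplit]
    linarith
  have hray := rayleigh' hA X hunit
  have heq : X ⬝ᵥ (A *ᵥ X) = specRad A :=
    le_antisymm hray.1 (by rw [← hrho]; exact hQle)
  exact hray.2 heq
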